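/- arXiv:1503.03742 — 2 statements merged into one kernel-verified Lean document; each statement's English description precedes it below -/
import Mathlib

section
/- Assume {(a_i,u_i)}_{i=1}^n is superincreasing and let θ be the greedy solution of K. Then θ ∈ K and ∑_{i=1}^n a_i θ_i = max{∑_{i=1}^n a_i x_i : x ∈ K} (θ is a maximal packing of K). Moreover, θ is the unique point of K attaining this maximum if and only if for every j ∈ {1,…,n} with a_j = ∑_{i=1}^{j−1} a_i u_i and θ_j > 0 there exists i < j with θ_i > 0. -/
/-!
At the last coordinate `j` where a feasible `x` differs from the greedy `θ` we have
`x j < θ j`, since `θ j` is the largest value allowed both by `u j` and by the capacity left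
by the common higher coordinates. The loss of at least `a j` at `j` cannot be made up below `j`,
where `x` packs at most `∑_{i<j} a i * u i ≤ a j`. Hence `∑ a x ≤ ∑ a θ`, with equality only if
`a j = ∑_{i<j} a i * u i` and `θ i = 0` for all `i < j`; conversely, in that situation taking one
unit off `θ j` and filling every lower coordinate to capacity gives a second maximal packing.
-/

open Finset

section

variable {ι M : Type*} [LinearOrder ι]

theorem sum_eq_sum_Iio_add_add_sum_Ioi [Fintype ι] [LocallyFiniteOrderTop ι]
    [LocallyFiniteOrderBot ι] [AddCommMonoid M] (f : ι → M) (j : ι) :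
    ∑ i, f i = ∑ i ∈ Iio j, f i + f j + ∑ i ∈ Ioi j, f i := by
  rw [add_assoc, add_comm (f j), sum_Ioi_add_eq_sum_Ici,
    ← sum_filter_add_sum_filter_not univ (· < j)]
  congr 2 <;> ext <;> simp

theorem sum_le_of_isUpperSet [LocallyFiniteOrderTop ι] [AddCommMonoid M] [Preorder M]
    {f : ι → M} {b : M} (hb : 0 ≤ b)
    (h : ∀ m, ∑ k ∈ Ici m, f k ≤ b) {s : Finset ι} (hs : IsUpperSet (s : Set ι)) :
    ∑ k ∈ s, f k ≤ b := by
  rcases s.eq_empty_or_nonempty with rfl | hne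
  · simpa
  · convert h (s.min' hne) using 2
    ext k
    rw [mem_Ici]
    exact ⟨s.min'_le k, fun hk => hs hk (s.min'_mem hne)⟩

theorem Function.exists_ne_forall_lt_eq [Finite ι] {α : Type*} {f g : ι → α} (h : f ≠ g) :
    ∃ j, f j ≠ g j ∧ ∀ k, j < k → f k = g k := by
  obtain ⟨j, hj⟩ := (Set.toFinite {k | f k ≠ g k}).exists_maximal (Function.ne_iff.1 h)
  refine ⟨j, hj.prop, fun k hjk => ?_⟩
  by_contra hk
  exact hjk.not_ge (hj.le_of_ge hk hjk.le)

end

section Knapsack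

variable {ι : Type*} [LinearOrder ι] [LocallyFiniteOrderTop ι]

def IsGreedySolution (a u : ι → ℤ) (b : ℤ) (θ : ι → ℤ) : Prop :=
  ∀ i, θ i = min (u i) ((b - ∑ k ∈ Ioi i, a k * θ k).fdiv (a i))

def IsSuperincreasing [LocallyFiniteOrderBot ι] (a u : ι → ℤ) : Prop :=
  ∀ j, ∑ i ∈ Iio j, a i * u i ≤ a j

theorem sum_mul_add_le_of_lt_of_eqOn_Ioi [Fintype ι] [LocallyFiniteOrderBot ι] {a u x y : ι → ℤ}
    (ha : ∀ i, 0 ≤ a i) (hxu : ∀ i, x i ≤ u i) {j : ι} (hlt : x j < y j)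
    (heq : ∀ k, j < k → x k = y k) :
    ∑ i, a i * x i + ∑ i ∈ Iio j, a i * y i + (a j - ∑ i ∈ Iio j, a i * u i) ≤
      ∑ i, a i * y i := by
  have hbelow : ∑ i ∈ Iio j, a i * x i ≤ ∑ i ∈ Iio j, a i * u i :=
    sum_le_sum fun i _ => mul_le_mul_of_nonneg_left (hxu i) (ha i)
  have hat : a j * x j ≤ a j * (y j - 1) := mul_le_mul_of_nonneg_left (by omega) (ha j)
  have habove : ∑ i ∈ Ioi j, a i * x i = ∑ i ∈ Ioi j, a i * y i :=
    sum_congr rfl fun k hk => by rw [heq k (mem_Ioi.1 hk)]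
  rw [sum_eq_sum_Iio_add_add_sum_Ioi _ j, sum_eq_sum_Iio_add_add_sum_Ioi (fun i => a i * y i) j,
    habove]
  linarith

theorem exists_ne_sum_mul_eq [Fintype ι] [LocallyFiniteOrderBot ι] {a u y : ι → ℤ}
    (hu : ∀ i, 0 ≤ u i) (hy : ∀ i, 0 ≤ y i ∧ y i ≤ u i) {j : ι} (hja : a j = ∑ i ∈ Iio j, a i * u i)
    (hyj : 0 < y j) (hzero : ∀ i, i < j → y i = 0) :
    ∃ x : ι → ℤ, (∀ i, 0 ≤ x i ∧ x i ≤ u i) ∧ x ≠ y ∧ ∑ i, a i * x i = ∑ i, a i * y i := by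
  set x : ι → ℤ := fun k => if k < j then u k else if k = j then y j - 1 else y k with hx
  have hxj : x j = y j - 1 := by simp [hx]
  have hxgt : ∀ k, j < k → x k = y k := fun k hk => by simp [hx, hk.not_gt, hk.ne']
  refine ⟨x, fun i => ?_, fun h => by simpa [hxj] using congr_fun h j, ?_⟩
  · rcases lt_trichotomy i j with hij | rfl | hji
    · simpa [hx, hij] using hu i
    · rw [hxj]; constructor <;> linarith [hy i]
    · rw [hxgt i hji]; exact hy i
  · have hbelow : ∑ i ∈ Iio j, a i * x i = a j := by
      rw [hja]; exact sum_congr rfl fun i hi => by simp [hx, mem_Iio.1 hi]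
    have hbelow' : ∑ i ∈ Iio j, a i * y i = 0 :=
      sum_eq_zero fun i hi => by rw [hzero i (mem_Iio.1 hi), mul_zero]
    have habove : ∑ i ∈ Ioi j, a i * x i = ∑ i ∈ Ioi j, a i * y i :=
      sum_congr rfl fun k hk => by rw [hxgt k (mem_Ioi.1 hk)]
    rw [sum_eq_sum_Iio_add_add_sum_Ioi _ j, sum_eq_sum_Iio_add_add_sum_Ioi (fun i => a i * y i) j,
      hbelow, hbelow', habove, hxj]
    ring

namespace IsGreedySolution

variable {a u θ : ι → ℤ} {b : ℤ}

theorem le_upper (hθ : IsGreedySolution a u b θ) (i : ι) : θ i ≤ u i :=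
  (hθ i).trans_le (min_le_left _ _)

theorem eq_min_ediv (hθ : IsGreedySolution a u b θ) (ha : ∀ i, 0 < a i) (i : ι) :
    θ i = min (u i) ((b - ∑ k ∈ Ioi i, a k * θ k) / a i) := by
  rw [hθ i, Int.fdiv_eq_ediv_of_nonneg _ (ha i).le]

theorem sum_Ici_le (hθ : IsGreedySolution a u b θ) (ha : ∀ i, 0 < a i) (m : ι) :
    ∑ k ∈ Ici m, a k * θ k ≤ b := by
  have h : θ m * a m ≤ b - ∑ k ∈ Ioi m, a k * θ k :=
    (Int.le_ediv_iff_mul_le (ha m)).1 ((hθ.eq_min_ediv ha m).trans_le (min_le_right _ _))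
  rw [← sum_Ioi_add_eq_sum_Ici]
  linarith

theorem sum_Ioi_le (hθ : IsGreedySolution a u b θ) (ha : ∀ i, 0 < a i) (hb : 0 ≤ b) (i : ι) :
    ∑ k ∈ Ioi i, a k * θ k ≤ b :=
  sum_le_of_isUpperSet hb (hθ.sum_Ici_le ha) (by rw [coe_Ioi]; exact isUpperSet_Ioi i)

theorem sum_le [Fintype ι] (hθ : IsGreedySolution a u b θ) (ha : ∀ i, 0 < a i) (hb : 0 ≤ b) :
    ∑ k, a k * θ k ≤ b :=
  sum_le_of_isUpperSet hb (hθ.sum_Ici_le ha) (by rw [coe_univ]; exact isUpperSet_univ)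

theorem nonneg (hθ : IsGreedySolution a u b θ) (ha : ∀ i, 0 < a i) (hu : ∀ i, 0 ≤ u i)
    (hb : 0 ≤ b) (i : ι) : 0 ≤ θ i := by
  rw [hθ.eq_min_ediv ha i]
  exact le_min (hu i) (Int.ediv_nonneg (sub_nonneg.2 (hθ.sum_Ioi_le ha hb i)) (ha i).le)

theorem le_of_eqOn_Ioi [Fintype ι] [LocallyFiniteOrderBot ι] (hθ : IsGreedySolution a u b θ)
    (ha : ∀ i, 0 < a i) {x : ι → ℤ} (hx : ∀ i, 0 ≤ x i ∧ x i ≤ u i) (hxb : ∑ i, a i * x i ≤ b)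
    {j : ι} (heq : ∀ k, j < k → x k = θ k) : x j ≤ θ j := by
  have habove : ∑ i ∈ Ioi j, a i * x i = ∑ i ∈ Ioi j, a i * θ i :=
    sum_congr rfl fun k hk => by rw [heq k (mem_Ioi.1 hk)]
  have hbelow : 0 ≤ ∑ i ∈ Iio j, a i * x i :=
    sum_nonneg fun i _ => mul_nonneg (ha i).le (hx i).1
  rw [sum_eq_sum_Iio_add_add_sum_Ioi _ j, habove] at hxb
  rw [hθ.eq_min_ediv ha j]
  exact le_min (hx j).2 ((Int.le_ediv_iff_mul_le (ha j)).2 (by linarith))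

theorem exists_lt_of_ne [Fintype ι] [LocallyFiniteOrderBot ι] (hθ : IsGreedySolution a u b θ)
    (ha : ∀ i, 0 < a i) {x : ι → ℤ} (hx : ∀ i, 0 ≤ x i ∧ x i ≤ u i) (hxb : ∑ i, a i * x i ≤ b)
    (hne : x ≠ θ) : ∃ j, x j < θ j ∧ ∀ k, j < k → x k = θ k := by
  obtain ⟨j, hj, heq⟩ := Function.exists_ne_forall_lt_eq hne
  exact ⟨j, (hθ.le_of_eqOn_Ioi ha hx hxb heq).lt_of_ne hj, heq⟩

theorem sum_mul_le [Fintype ι] [LocallyFiniteOrderBot ι] (hθ : IsGreedySolution a u b θ)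
    (ha : ∀ i, 0 < a i) (hu : ∀ i, 0 ≤ u i) (hb : 0 ≤ b) (hsi : IsSuperincreasing a u)
    {x : ι → ℤ} (hx : ∀ i, 0 ≤ x i ∧ x i ≤ u i) (hxb : ∑ i, a i * x i ≤ b) :
    ∑ i, a i * x i ≤ ∑ i, a i * θ i := by
  obtain rfl | hne := eq_or_ne x θ
  · rfl
  obtain ⟨j, hlt, heq⟩ := hθ.exists_lt_of_ne ha hx hxb hne
  have hgap := sum_mul_add_le_of_lt_of_eqOn_Ioi (fun i => (ha i).le) (fun i => (hx i).2) hlt heq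
  have hbelow : 0 ≤ ∑ i ∈ Iio j, a i * θ i :=
    sum_nonneg fun i _ => mul_nonneg (ha i).le (hθ.nonneg ha hu hb i)
  linarith [hsi j]

theorem eq_of_sum_mul_eq_iff [Fintype ι] [LocallyFiniteOrderBot ι]
    (hθ : IsGreedySolution a u b θ) (ha : ∀ i, 0 < a i) (hu : ∀ i, 0 ≤ u i) (hb : 0 ≤ b)
    (hsi : IsSuperincreasing a u) :
    (∀ x : ι → ℤ, (∀ i, 0 ≤ x i ∧ x i ≤ u i) → ∑ i, a i * x i ≤ b →
        ∑ i, a i * x i = ∑ i, a i * θ i → x = θ) ↔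
      ∀ j, a j = ∑ i ∈ Iio j, a i * u i → 0 < θ j → ∃ i, i < j ∧ 0 < θ i := by
  have hθ0 := hθ.nonneg ha hu hb
  constructor
  · intro huniq j hja hθj
    by_contra! hzero
    obtain ⟨x, hx, hne, hsum⟩ := exists_ne_sum_mul_eq hu (fun i => ⟨hθ0 i, hθ.le_upper i⟩) hja
      hθj fun i hij => (hzero i hij).antisymm (hθ0 i)
    exact hne (huniq x hx (hsum ▸ hθ.sum_le ha hb) hsum)
  · intro hcond x hx hxb hsum
    by_contra hne
    obtain ⟨j, hlt, heq⟩ := hθ.exists_lt_of_ne ha hx hxb hne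
    have hgap := sum_mul_add_le_of_lt_of_eqOn_Ioi (fun i => (ha i).le) (fun i => (hx i).2) hlt heq
    have hterm : ∀ i ∈ Iio j, 0 ≤ a i * θ i := fun i _ => mul_nonneg (ha i).le (hθ0 i)
    have hbelow : ∑ i ∈ Iio j, a i * θ i = 0 := by linarith [sum_nonneg hterm, hsi j]
    have hja : a j = ∑ i ∈ Iio j, a i * u i := by linarith [sum_nonneg hterm, hsi j]
    obtain ⟨i, hij, hθi⟩ := hcond j hja ((hx j).1.trans_lt hlt)
    exact (mul_pos (ha i) hθi).ne' ((sum_eq_zero_iff_of_nonneg hterm).1 hbelow i (mem_Iio.2 hij))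

end IsGreedySolution

theorem Fin.isSuperincreasing_of_succ {n : ℕ} {a u : Fin n → ℤ} (ha : ∀ i, 0 ≤ a i)
    (hsi : ∀ i j : Fin n, (j : ℕ) = (i : ℕ) + 1 → ∑ k ∈ Iic i, a k * u k ≤ a j) :
    IsSuperincreasing a u := by
  rintro ⟨_ | m, hj⟩
  · convert ha ⟨0, hj⟩
    refine sum_eq_zero fun k hk => ?_
    simp [Fin.lt_def] at hk
  · convert hsi ⟨m, by omega⟩ ⟨m + 1, hj⟩ rfl using 2
    ext k
    simp [Fin.lt_def, Fin.le_def]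

end Knapsack

theorem stmt_3_general {n : ℕ}
    (a u : Fin n → ℤ) (ha : ∀ i, 0 < a i) (hu : ∀ i, 1 ≤ u i)
    (b : ℤ) (hb : 0 < b)
    (hsi : ∀ i j : Fin n, (j : ℕ) = (i : ℕ) + 1 →
      ∑ k ∈ Finset.Iic i, a k * u k ≤ a j)
    (θ : Fin n → ℤ)
    (hθ : ∀ i : Fin n,
      θ i = min (u i) ((b - ∑ k ∈ Finset.Ioi i, a k * θ k).fdiv (a i))) :
    ((∀ i, 0 ≤ θ i ∧ θ i ≤ u i) ∧ ∑ i, a i * θ i ≤ b) ∧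
    (∀ x : Fin n → ℤ, (∀ i, 0 ≤ x i ∧ x i ≤ u i) → ∑ i, a i * x i ≤ b →
      ∑ i, a i * x i ≤ ∑ i, a i * θ i) ∧
    ((∀ x : Fin n → ℤ, (∀ i, 0 ≤ x i ∧ x i ≤ u i) → ∑ i, a i * x i ≤ b →
        ∑ i, a i * x i = ∑ i, a i * θ i → x = θ) ↔
      (∀ j : Fin n, a j = ∑ i ∈ Finset.Iio j, a i * u i → 0 < θ j →
        ∃ i, i < j ∧ 0 < θ i)) := by
  have hgreedy : IsGreedySolution a u b θ := hθ
  have hsup := Fin.isSuperincreasing_of_succ (fun i => (ha i).le) hsi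
  have hu0 : ∀ i, 0 ≤ u i := fun i => zero_le_one.trans (hu i)
  exact ⟨⟨fun i => ⟨hgreedy.nonneg ha hu0 hb.le i, hgreedy.le_upper i⟩, hgreedy.sum_le ha hb.le⟩,
    fun x hx hxb => hgreedy.sum_mul_le ha hu0 hb.le hsup hx hxb,
    hgreedy.eq_of_sum_mul_eq_iff ha hu0 hb.le hsup⟩

/-- the greedy solution `θ` of a superincreasing knapsack belongs to `K` and
is a maximal packing; it is the unique maximal packing iff for every `j` with
`a j = ∑_{i<j} a i * u i` and `θ j > 0` there is some `i < j` with `θ i > 0`. -/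
theorem stmt_3 {n : ℕ} (hn : 1 ≤ n)
    (a u : Fin n → ℤ) (ha : ∀ i, 0 < a i) (hu : ∀ i, 1 ≤ u i)
    (b : ℤ) (hb : 0 < b)
    (hsi : ∀ i j : Fin n, (j : ℕ) = (i : ℕ) + 1 →
      ∑ k ∈ Finset.Iic i, a k * u k ≤ a j)
    (θ : Fin n → ℤ)
    (hθ : ∀ i : Fin n,
      θ i = min (u i) ((b - ∑ k ∈ Finset.Ioi i, a k * θ k).fdiv (a i))) :
    ((∀ i, 0 ≤ θ i ∧ θ i ≤ u i) ∧ ∑ i, a i * θ i ≤ b) ∧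
    (∀ x : Fin n → ℤ, (∀ i, 0 ≤ x i ∧ x i ≤ u i) → ∑ i, a i * x i ≤ b →
      ∑ i, a i * x i ≤ ∑ i, a i * θ i) ∧
    ((∀ x : Fin n → ℤ, (∀ i, 0 ≤ x i ∧ x i ≤ u i) → ∑ i, a i * x i ≤ b →
        ∑ i, a i * x i = ∑ i, a i * θ i → x = θ) ↔
      (∀ j : Fin n, a j = ∑ i ∈ Finset.Iio j, a i * u i → 0 < θ j →
        ∃ i, i < j ∧ 0 < θ i)) :=
  stmt_3_general a u ha hu b hb hsi θ hθ
end

section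
/- Assume {(a_i,u_i)}_{i=1}^n is superincreasing, a_i u_i ≤ b for all i, and ∑_{i=1}^n a_i u_i > b. Then for every j ∈ {1,…,n} with θ_j < u_j there exist n points x¹,…,xⁿ ∈ K that are affinely independent (as points of ℝⁿ) and each satisfies the packing inequality for j with equality: x_j + ∑_{i ∈ I_j} φ_j(i)(x_i − θ_i) = θ_j. Hence the packing inequality for j is facet-defining for conv(K). -/
/-!
Write `I_j` for the packed indices `i > j` with `θ i ≥ 1`. Besides `θ`, take for each `i ∈ I_j`
the point that raises `x_j` and the packed `x_k`, `j < k < i`, to their bounds and lowers `x_i`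
by one: the coefficients `φ_j` are a telescoping product made exactly so that this keeps the
packing form at `θ_j`. For the remaining `m ≠ j` take `θ - e_m` if `θ_m ≥ 1`, and the point built
for the last index plus `e_m` if `θ_m = 0`. All these points lie in `K`: each lowers some coordinate
`i` of `θ` by one, and by superincreasingness the saved weight `a_i` pays for every increase
below `i`. Their differences from `θ` form a triangular system with nonzero diagonal.
-/

/-- Embedding of integer vectors into real vectors. -/
noncomputable def toReal {n : ℕ} (x : Fin n → ℤ) : Fin n → ℝ := fun i => (x i : ℝ)

open Finset

theorem linearIndependent_of_triangular {ι ι' R β : Type*} [Fintype ι] [Ring R]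
    [NoZeroDivisors R] [Preorder β] [WellFoundedGT β] (v : ι → ι' → R) (e : ι → ι')
    (κ : ι → β) (hdiag : ∀ i, v i (e i) ≠ 0)
    (htri : ∀ i k, i ≠ k → v i (e k) ≠ 0 → κ k < κ i) : LinearIndependent R v := by
  classical
  rw [Fintype.linearIndependent_iff]
  intro g hg k
  induction hk : κ k using WellFoundedGT.induction generalizing k with
  | _ c ih =>
    have hcol : ∑ i, g i * v i (e k) = 0 := by
      simpa using congrFun hg (e k)
    rw [sum_eq_single k (fun i _ hik => ?_) (by simp)] at hcol
    · exact (mul_eq_zero.mp hcol).resolve_right (hdiag k)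
    · by_cases hv : v i (e k) = 0
      · rw [hv, mul_zero]
      · rw [ih _ (hk ▸ htri i k hik hv) i rfl, zero_mul]

theorem affineIndependent_of_triangular {ι R β : Type*} [Fintype ι] [Field R]
    [Preorder β] [WellFoundedGT β] (p : ι → ι → R) (j : ι) (κ : ι → β)
    (hdiag : ∀ i ≠ j, p i i ≠ p j i)
    (htri : ∀ i k, i ≠ j → k ≠ j → i ≠ k → p i k ≠ p j k → κ k < κ i) :
    AffineIndependent R p := by
  classical
  rw [affineIndependent_iff_linearIndependent_vsub R p j]
  refine linearIndependent_of_triangular _ Subtype.val (fun i => κ i) (fun i => ?_)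
    (fun i k hik hv => htri i k i.2 k.2 (Subtype.coe_ne_coe.mpr hik) ?_)
  · simpa [sub_eq_zero] using hdiag i i.2
  · simpa [sub_eq_zero] using hv

theorem sum_mul_le_of_superincreasing {ι : Type*} [Fintype ι] [LinearOrder ι]
    [LocallyFiniteOrderBot ι]
    {a θ u x : ι → ℤ} {i : ι} (ha : ∀ k, 0 ≤ a k) (hθ : ∀ k, 0 ≤ θ k)
    (hsi : ∑ k ∈ Iio i, a k * u k ≤ a i) (hxu : ∀ k, x k ≤ u k) (hxi : x i < θ i)
    (hx : ∀ k, i < k → x k ≤ θ k) : ∑ k, a k * x k ≤ ∑ k, a k * θ k := by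
  have hterm : ∀ k, a k * x k - a k * θ k ≤
      (if k < i then a k * u k else 0) - (if k = i then a k else 0) := by
    intro k
    rcases lt_trichotomy k i with h | rfl | h
    · simp only [if_pos h, if_neg h.ne]
      nlinarith [ha k, hθ k, hxu k]
    · simp only [lt_irrefl, if_false, if_true]
      nlinarith [ha k]
    · simp only [if_neg h.not_gt, if_neg h.ne']
      nlinarith [ha k, hx k h]
  have hsum := sum_le_sum fun k (_ : k ∈ univ) => hterm k
  rw [sum_sub_distrib, sum_sub_distrib, ← sum_filter, filter_gt_eq_Iio, sum_ite_eq' univ i a,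
    if_pos (mem_univ i)] at hsum
  linarith

section Greedy

variable {ι : Type*} [LinearOrder ι] [LocallyFiniteOrderTop ι]

def IsGreedy (a u : ι → ℤ) (b : ℤ) (θ : ι → ℤ) : Prop :=
  ∀ i, θ i = min (u i) ((b - ∑ k ∈ Ioi i, a k * θ k).fdiv (a i))

namespace IsGreedy

variable {a u θ : ι → ℤ} {b : ℤ}

theorem le (hθ : IsGreedy a u b θ) (i : ι) : θ i ≤ u i := by
  rw [hθ i]; exact min_le_left _ _

theorem mul_le_sub_sum_Ioi (hθ : IsGreedy a u b θ) {i : ι} (ha : 0 < a i) :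
    a i * θ i ≤ b - ∑ k ∈ Ioi i, a k * θ k := by
  have h := min_le_right (u i) ((b - ∑ k ∈ Ioi i, a k * θ k).fdiv (a i))
  rw [← hθ i, Int.fdiv_eq_ediv_of_nonneg _ ha.le] at h
  calc a i * θ i ≤ a i * ((b - ∑ k ∈ Ioi i, a k * θ k) / a i) :=
        mul_le_mul_of_nonneg_left h ha.le
    _ ≤ b - ∑ k ∈ Ioi i, a k * θ k := Int.mul_ediv_self_le ha.ne'

theorem sum_le_of_isUpperSet (hθ : IsGreedy a u b θ) (ha : ∀ i, 0 < a i) (hb : 0 ≤ b)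
    {s : Finset ι} (hs : IsUpperSet (s : Set ι)) : ∑ k ∈ s, a k * θ k ≤ b := by
  classical
  rcases s.eq_empty_or_nonempty with rfl | hne
  · simpa using hb
  -- a nonempty upper set is `Ici` of its minimum, where the greedy step applies
  have hs' : s = Ici (s.min' hne) := by
    ext k
    rw [mem_Ici]
    exact ⟨s.min'_le k, fun hk => hs hk (s.min'_mem hne)⟩
  rw [hs', ← Ioi_insert, sum_insert notMem_Ioi_self]
  linarith [hθ.mul_le_sub_sum_Ioi (ha (s.min' hne))]

theorem nonneg (hθ : IsGreedy a u b θ) (ha : ∀ i, 0 < a i) (hu : ∀ i, 0 ≤ u i) (hb : 0 ≤ b)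
    (i : ι) : 0 ≤ θ i := by
  rw [hθ i, Int.fdiv_eq_ediv_of_nonneg _ (ha i).le]
  have := hθ.sum_le_of_isUpperSet ha hb (s := Ioi i)
    (by rw [coe_Ioi]; exact isUpperSet_Ioi i)
  exact le_min (hu i) (Int.ediv_nonneg (by linarith) (ha i).le)

theorem sum_le [Fintype ι] (hθ : IsGreedy a u b θ) (ha : ∀ i, 0 < a i) (hb : 0 ≤ b) :
    ∑ k, a k * θ k ≤ b :=
  hθ.sum_le_of_isUpperSet ha hb (by rw [coe_univ]; exact isUpperSet_univ)

theorem eq_of_isMax (hθ : IsGreedy a u b θ) {i : ι} (ha : 0 < a i) (hi : IsMax i)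
    (hub : a i * u i ≤ b) : θ i = u i := by
  rw [hθ i, Ioi_eq_empty.mpr hi, sum_empty, sub_zero, Int.fdiv_eq_ediv_of_nonneg _ ha.le]
  exact min_eq_left ((Int.le_ediv_iff_mul_le ha).mpr (by linarith))

end IsGreedy

end Greedy

theorem sum_Iio_mul_le_of_superincreasing {n : ℕ} {a u : Fin n → ℤ} (ha : ∀ i, 0 < a i)
    (hsi : ∀ i j : Fin n, (j : ℕ) = (i : ℕ) + 1 → ∑ k ∈ Iic i, a k * u k ≤ a j) (i : Fin n) :
    ∑ k ∈ Iio i, a k * u k ≤ a i := by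
  rcases Nat.eq_zero_or_pos i with hi | hi
  · have : Iio i = ∅ := by
      ext k; simp [Fin.lt_def, hi]
    simpa [this] using (ha i).le
  · have : Iio i = Iic ⟨i - 1, by omega⟩ := by
      ext k; simp only [mem_Iio, mem_Iic, Fin.lt_def, Fin.le_def]; omega
    exact this ▸ hsi _ i (by simp; omega)

section FacetPoints

variable {n : ℕ} (u θ : Fin n → ℤ) (j : Fin n)

def packedAbove : Finset (Fin n) := {i ∈ Ioi j | 1 ≤ θ i}

def packedBetween (i : Fin n) : Finset (Fin n) := {k ∈ Ioo j i | 1 ≤ θ k}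

def raisePoint (i : Fin n) : Fin n → ℤ := fun k =>
  if k = i then θ i - 1 else if k = j ∨ k ∈ packedBetween θ j i then u k else θ k

def packingCoeff (i : Fin n) : ℤ := (u j - θ j) * ∏ k ∈ packedBetween θ j i, (u k + 1 - θ k)

def facetPoint (L m : Fin n) : Fin n → ℤ :=
  if m = j then θ
  else if m ∈ packedAbove θ j then raisePoint u θ j m
  else if θ m = 0 then Function.update (raisePoint u θ j L) m 1
  else Function.update θ m (θ m - 1)

variable {u θ j} {i k : Fin n}

theorem mem_packedBetween : k ∈ packedBetween θ j i ↔ j < k ∧ k < i ∧ 1 ≤ θ k := by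
  simp [packedBetween, and_assoc]

theorem mem_packedAbove : k ∈ packedAbove θ j ↔ j < k ∧ 1 ≤ θ k := by
  simp [packedAbove]

theorem packedBetween_subset_packedAbove : packedBetween θ j i ⊆ packedAbove θ j :=
  fun _ hk => by
    rw [mem_packedBetween] at hk
    exact mem_packedAbove.mpr ⟨hk.1, hk.2.2⟩

theorem filter_lt_packedBetween (hk : k ∈ packedBetween θ j i) :
    {l ∈ packedBetween θ j i | l < k} = packedBetween θ j k := by
  have hki := (mem_packedBetween.mp hk).2.1
  ext l
  simp only [mem_filter, mem_packedBetween]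
  exact ⟨fun ⟨⟨h1, _, h3⟩, h4⟩ => ⟨h1, h4, h3⟩,
    fun ⟨h1, h2, h3⟩ => ⟨⟨h1, h2.trans hki, h3⟩, h2⟩⟩

theorem raisePoint_self : raisePoint u θ j i i = θ i - 1 := if_pos rfl

theorem raisePoint_left (hji : j < i) : raisePoint u θ j i j = u j := by
  simp [raisePoint, hji.ne]

theorem raisePoint_of_mem (hk : k ∈ packedBetween θ j i) : raisePoint u θ j i k = u k := by
  simp [raisePoint, (mem_packedBetween.mp hk).2.1.ne, hk]

theorem raisePoint_of_ne (hki : k ≠ i) (hkj : k ≠ j) (hk : k ∉ packedBetween θ j i) :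
    raisePoint u θ j i k = θ k := by
  simp [raisePoint, hki, hkj, hk]

theorem raisePoint_of_lt (hji : j < i) (hik : i < k) : raisePoint u θ j i k = θ k :=
  raisePoint_of_ne hik.ne' (hji.trans hik).ne'
    fun hk => (mem_packedBetween.mp hk).2.1.not_gt hik

theorem raisePoint_mem_Icc (hθ0 : ∀ k, 0 ≤ θ k) (hθu : ∀ k, θ k ≤ u k) (hθi : 1 ≤ θ i)
    (k : Fin n) :
    0 ≤ raisePoint u θ j i k ∧ raisePoint u θ j i k ≤ u k := by
  unfold raisePoint
  split_ifs with h1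
  · subst h1; constructor <;> linarith [hθu k]
  · exact ⟨(hθ0 k).trans (hθu k), le_rfl⟩
  · exact ⟨hθ0 k, hθu k⟩

theorem sum_mul_raisePoint_le {a : Fin n → ℤ} (ha : ∀ k, 0 ≤ a k) (hθ0 : ∀ k, 0 ≤ θ k)
    (hθu : ∀ k, θ k ≤ u k) (hsi : ∑ k ∈ Iio i, a k * u k ≤ a i) (hji : j < i)
    (hθi : 1 ≤ θ i) :
    ∑ k, a k * raisePoint u θ j i k ≤ ∑ k, a k * θ k :=
  sum_mul_le_of_superincreasing ha hθ0 hsi (fun k => (raisePoint_mem_Icc hθ0 hθu hθi k).2)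
    (by rw [raisePoint_self]; omega) fun _ hik => (raisePoint_of_lt hji hik).le

theorem mem_packedAbove_of_raisePoint_ne (hi : i ∈ packedAbove θ j) (hkj : k ≠ j)
    (h : raisePoint u θ j i k ≠ θ k) : k ∈ packedAbove θ j ∧ k ≤ i := by
  by_cases hki : k = i
  · exact ⟨hki ▸ hi, hki.le⟩
  by_cases hk : k ∈ packedBetween θ j i
  · exact ⟨packedBetween_subset_packedAbove hk, (mem_packedBetween.mp hk).2.1.le⟩
  · exact absurd (raisePoint_of_ne hki hkj hk) h

theorem sub_add_sum_packedBetween (i : Fin n) :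
    u j - θ j + ∑ k ∈ packedBetween θ j i, packingCoeff u θ j k * (u k - θ k)
      = packingCoeff u θ j i := by
  have hfactor : ∀ k, u k + 1 - θ k = 1 + (u k - θ k) := fun k => by ring
  simp only [packingCoeff, hfactor]
  rw [prod_one_add_ordered, mul_add, mul_one, mul_sum]
  congr 1
  refine sum_congr rfl fun k hk => ?_
  rw [filter_lt_packedBetween hk]
  ring

theorem raisePoint_packing (hi : i ∈ packedAbove θ j) :
    raisePoint u θ j i j +
      ∑ k ∈ packedAbove θ j, packingCoeff u θ j k * (raisePoint u θ j i k - θ k) = θ j := by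
  have hji := (mem_packedAbove.mp hi).1
  have hterm : ∀ k ∈ packedAbove θ j, packingCoeff u θ j k * (raisePoint u θ j i k - θ k) =
      (if k ∈ packedBetween θ j i then packingCoeff u θ j k * (u k - θ k) else 0) -
        (if k = i then packingCoeff u θ j k else 0) := by
    intro k hk
    have hkj := (mem_packedAbove.mp hk).1.ne'
    by_cases hki : k = i
    · subst hki
      have : k ∉ packedBetween θ j k := fun h => (mem_packedBetween.mp h).2.1.false
      simp [raisePoint_self, this]
    by_cases hkb : k ∈ packedBetween θ j i
    · simp [raisePoint_of_mem hkb, hkb, hki]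
    · simp [raisePoint_of_ne hki hkj hkb, hkb, hki]
  rw [sum_congr rfl hterm, sum_sub_distrib, sum_ite_mem,
    inter_eq_right.mpr packedBetween_subset_packedAbove, sum_ite_eq', if_pos hi,
    raisePoint_left hji]
  linarith [sub_add_sum_packedBetween (u := u) (θ := θ) (j := j) i]

variable {L m : Fin n}

theorem facetPoint_self : facetPoint u θ j L j = θ := if_pos rfl

theorem facetPoint_mem_Icc (hθ0 : ∀ k, 0 ≤ θ k) (hθu : ∀ k, θ k ≤ u k) (hu : ∀ k, 1 ≤ u k)
    (hL : L ∈ packedAbove θ j) (m k : Fin n) :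
    0 ≤ facetPoint u θ j L m k ∧ facetPoint u θ j L m k ≤ u k := by
  unfold facetPoint
  split_ifs with hmj hmP hm0
  · exact ⟨hθ0 k, hθu k⟩
  · exact raisePoint_mem_Icc hθ0 hθu (mem_packedAbove.mp hmP).2 k
  · rw [Function.update_apply]
    split_ifs
    · exact ⟨zero_le_one, hu k⟩
    · exact raisePoint_mem_Icc hθ0 hθu (mem_packedAbove.mp hL).2 k
  · rw [Function.update_apply]
    split_ifs with hkm
    · subst hkm; have := hθ0 k; have := hθu k; omega
    · exact ⟨hθ0 k, hθu k⟩

theorem sum_mul_facetPoint_le {a : Fin n → ℤ} (ha : ∀ k, 0 ≤ a k) (hθ0 : ∀ k, 0 ≤ θ k)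
    (hθu : ∀ k, θ k ≤ u k) (hu : ∀ k, 1 ≤ u k) (hsi : ∀ i, ∑ k ∈ Iio i, a k * u k ≤ a i)
    (hL : L ∈ packedAbove θ j) (hLmax : ∀ k, k ≤ L) (m : Fin n) :
    ∑ k, a k * facetPoint u θ j L m k ≤ ∑ k, a k * θ k := by
  have hbox := facetPoint_mem_Icc hθ0 hθu hu hL m
  unfold facetPoint at hbox ⊢
  split_ifs at hbox ⊢ with hmj hmP hm0
  · exact le_rfl
  · exact sum_mul_raisePoint_le ha hθ0 hθu (hsi m) (mem_packedAbove.mp hmP).1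
      (mem_packedAbove.mp hmP).2
  · have hmL : L ≠ m := fun h => hmP (h ▸ hL)
    refine sum_mul_le_of_superincreasing ha hθ0 (hsi L) (fun k => (hbox k).2) ?_
      fun k hk => absurd (hLmax k) hk.not_ge
    rw [Function.update_of_ne hmL, raisePoint_self]
    omega
  · refine sum_mul_le_of_superincreasing ha hθ0 (hsi m) (fun k => (hbox k).2) ?_
      fun k hk => by rw [Function.update_of_ne hk.ne']
    rw [Function.update_self]
    omega

theorem facetPoint_packing (hL : L ∈ packedAbove θ j) (m : Fin n) :
    facetPoint u θ j L m j +
      ∑ k ∈ packedAbove θ j, packingCoeff u θ j k * (facetPoint u θ j L m k - θ k) = θ j := by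
  unfold facetPoint
  split_ifs with hmj hmP hm0
  · simp
  · exact raisePoint_packing hmP
  · have hagree : ∀ k, k = j ∨ k ∈ packedAbove θ j →
        Function.update (raisePoint u θ j L) m 1 k = raisePoint u θ j L k := by
      rintro k hk
      exact Function.update_of_ne (by rintro rfl; tauto) _ _
    rw [hagree j (Or.inl rfl), sum_congr rfl fun k hk => by rw [hagree k (Or.inr hk)]]
    exact raisePoint_packing hL
  · have hagree : ∀ k, k = j ∨ k ∈ packedAbove θ j →
        Function.update θ m (θ m - 1) k = θ k := by
      rintro k hk
      exact Function.update_of_ne (by rintro rfl; tauto) _ _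
    rw [hagree j (Or.inl rfl), sum_congr rfl fun k hk => by rw [hagree k (Or.inr hk), sub_self,
      mul_zero], sum_const_zero, add_zero]

theorem facetPoint_ne_self (hmj : m ≠ j) : facetPoint u θ j L m m ≠ θ m := by
  unfold facetPoint
  split_ifs with hmj' hmP hm0
  · exact absurd hmj' hmj
  · rw [raisePoint_self]; omega
  · rw [Function.update_self, hm0]; omega
  · rw [Function.update_self]; omega

theorem mem_packedAbove_of_facetPoint_ne (hL : L ∈ packedAbove θ j) (hkj : k ≠ j) (hmk : m ≠ k)
    (h : facetPoint u θ j L m k ≠ θ k) :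
    k ∈ packedAbove θ j ∧ (m ∈ packedAbove θ j → k < m) := by
  unfold facetPoint at h
  split_ifs at h with hmj hmP hm0
  · exact absurd rfl h
  · obtain ⟨hk, hkm⟩ := mem_packedAbove_of_raisePoint_ne hmP hkj h
    exact ⟨hk, fun _ => lt_of_le_of_ne hkm (Ne.symm hmk)⟩
  · rw [Function.update_of_ne (Ne.symm hmk)] at h
    exact ⟨(mem_packedAbove_of_raisePoint_ne hL hkj h).1, fun h' => absurd h' hmP⟩
  · exact absurd (Function.update_of_ne (Ne.symm hmk) _ _) h

theorem affineIndependent_facetPoint (hL : L ∈ packedAbove θ j) :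
    AffineIndependent ℝ fun m => toReal (facetPoint u θ j L m) := by
  refine affineIndependent_of_triangular (fun m k => (facetPoint u θ j L m k : ℝ)) j
    (fun m => if m ∈ packedAbove θ j then (m : WithTop (Fin n)) else ⊤)
    (fun m hmj => ?_) (fun m k hmj hkj hmk h => ?_)
  · simpa [facetPoint_self] using facetPoint_ne_self hmj
  · simp only [facetPoint_self, ne_eq, Int.cast_inj] at h
    obtain ⟨hk, hkm⟩ := mem_packedAbove_of_facetPoint_ne hL hkj hmk h
    rw [if_pos hk]
    split_ifs with hm
    · exact WithTop.coe_lt_coe.mpr (hkm hm)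
    · exact WithTop.coe_lt_top k

end FacetPoints

theorem stmt_9_general {n : ℕ}
    (a u : Fin n → ℤ) (ha : ∀ i, 0 < a i) (hu : ∀ i, 1 ≤ u i)
    (b : ℤ) (hb : 0 < b)
    (hub : ∀ i, a i * u i ≤ b)
    (hsi : ∀ i j : Fin n, (j : ℕ) = (i : ℕ) + 1 →
      ∑ k ∈ Finset.Iic i, a k * u k ≤ a j)
    (θ : Fin n → ℤ)
    (hθ : ∀ i : Fin n,
      θ i = min (u i) ((b - ∑ k ∈ Finset.Ioi i, a k * θ k).fdiv (a i)))
    (φ : Fin n → Fin n → ℤ)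
    (hφ : ∀ j i : Fin n, φ j i =
      (u j - θ j) * ∏ k ∈ (Finset.Ioo j i).filter (fun k => 1 ≤ θ k), (u k + 1 - θ k))
    (j : Fin n) (hju : θ j < u j) :
    ∃ p : Fin n → (Fin n → ℤ),
      (∀ m, (∀ i, 0 ≤ p m i ∧ p m i ≤ u i) ∧ ∑ i, a i * p m i ≤ b) ∧
      AffineIndependent ℝ (fun m => toReal (p m)) ∧
      (∀ m, p m j + ∑ i ∈ (Finset.Ioi j).filter (fun i => 1 ≤ θ i),
        φ j i * (p m i - θ i) = θ j) := by
  have hgreedy : IsGreedy a u b θ := hθ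
  have hθ0 := hgreedy.nonneg ha (fun i => zero_le_one.trans (hu i)) hb.le
  have hθu := hgreedy.le
  obtain ⟨L, hLmax⟩ : ∃ L, ∀ k, k ≤ L :=
    ⟨univ.max' ⟨j, mem_univ j⟩, fun k => le_max' _ k (mem_univ k)⟩
  have hθL : θ L = u L := hgreedy.eq_of_isMax (ha L) (fun k _ => hLmax k) (hub L)
  have hL : L ∈ packedAbove θ j :=
    mem_packedAbove.mpr ⟨lt_of_le_of_ne (hLmax j) (by rintro rfl; omega), hθL ▸ hu L⟩
  have hφj : φ j = packingCoeff u θ j := funext (hφ j)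
  refine ⟨facetPoint u θ j L, fun m => ⟨facetPoint_mem_Icc hθ0 hθu hu hL m, ?_⟩,
    affineIndependent_facetPoint hL, fun m => hφj ▸ facetPoint_packing hL m⟩
  exact (sum_mul_facetPoint_le (fun k => (ha k).le) hθ0 hθu hu
    (sum_Iio_mul_le_of_superincreasing ha hsi) hL hLmax m).trans (hgreedy.sum_le ha hb.le)

/-- for every `j` with `θ j < u j` there exist `n` affinely independent
points of the superincreasing knapsack `K`, each satisfying the `j`-th packing
inequality with equality (hence the packing inequality is facet-defining). -/
theorem stmt_9 {n : ℕ} (hn : 1 ≤ n)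
    (a u : Fin n → ℤ) (ha : ∀ i, 0 < a i) (hu : ∀ i, 1 ≤ u i)
    (b : ℤ) (hb : 0 < b)
    (hub : ∀ i, a i * u i ≤ b) (hgt : b < ∑ i, a i * u i)
    (hsi : ∀ i j : Fin n, (j : ℕ) = (i : ℕ) + 1 →
      ∑ k ∈ Finset.Iic i, a k * u k ≤ a j)
    (θ : Fin n → ℤ)
    (hθ : ∀ i : Fin n,
      θ i = min (u i) ((b - ∑ k ∈ Finset.Ioi i, a k * θ k).fdiv (a i)))
    (φ : Fin n → Fin n → ℤ)
    (hφ : ∀ j i : Fin n, φ j i =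
      (u j - θ j) * ∏ k ∈ (Finset.Ioo j i).filter (fun k => 1 ≤ θ k), (u k + 1 - θ k))
    (j : Fin n) (hju : θ j < u j) :
    ∃ p : Fin n → (Fin n → ℤ),
      (∀ m, (∀ i, 0 ≤ p m i ∧ p m i ≤ u i) ∧ ∑ i, a i * p m i ≤ b) ∧
      AffineIndependent ℝ (fun m => toReal (p m)) ∧
      (∀ m, p m j + ∑ i ∈ (Finset.Ioi j).filter (fun i => 1 ≤ θ i),
        φ j i * (p m i - θ i) = θ j) :=
  stmt_9_general a u ha hu b hb hub hsi θ hθ φ hφ j hju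
end
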